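/- arXiv:1912.12505 — 2 statements merged into one kernel-verified Lean document; each statement's English description precedes it below -/
import Mathlib

section
/- Let Q* minimize I_Q(T:X|Y) over Δ_P, and let (t,x,y) ∈ supp(Δ_P). If Q*(t,x,y) = 0, then the marginal Q*(x,y) = 0, and hence Q*(t',x,y) = 0 for all t' ∈ 𝒯. -/
open scoped BigOperators
noncomputable section

variable {T X Y : Type*}

/-- A joint probability distribution of `(T,X,Y)`, as a function `T → X → Y → ℝ`. -/
def IsDist [Fintype T] [Fintype X] [Fintype Y] (P : T → X → Y → ℝ) : Prop :=
  (∀ t x y, 0 ≤ P t x y) ∧ ∑ t, ∑ x, ∑ y, P t x y = 1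

/-- The `(T,X)`-marginal. -/
def margTX [Fintype Y] (P : T → X → Y → ℝ) (t : T) (x : X) : ℝ := ∑ y, P t x y

/-- The `(T,Y)`-marginal. -/
def margTY [Fintype X] (P : T → X → Y → ℝ) (t : T) (y : Y) : ℝ := ∑ x, P t x y

/-- The `(X,Y)`-marginal. -/
def margXY [Fintype T] (P : T → X → Y → ℝ) (x : X) (y : Y) : ℝ := ∑ t, P t x y

/-- The `T`-marginal. -/
def margT [Fintype X] [Fintype Y] (P : T → X → Y → ℝ) (t : T) : ℝ := ∑ x, ∑ y, P t x y

/-- The `Y`-marginal. -/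
def margY [Fintype T] [Fintype X] (P : T → X → Y → ℝ) (y : Y) : ℝ := ∑ t, ∑ x, P t x y

/-- `Δ_P`: the polytope of joint distributions with the same `(T,X)`- and
`(T,Y)`-marginals as `P`. -/
def deltaP [Fintype T] [Fintype X] [Fintype Y] (P : T → X → Y → ℝ) :
    Set (T → X → Y → ℝ) :=
  {Q | IsDist Q ∧ (∀ t x, margTX Q t x = margTX P t x) ∧
    (∀ t y, margTY Q t y = margTY P t y)}

/-- The conditional entropy `H_Q(T|X,Y)` (with the convention `0 log 0 = 0`,
automatic since `Real.log 0 = 0`). -/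
def condEntTXY [Fintype T] [Fintype X] [Fintype Y] (Q : T → X → Y → ℝ) : ℝ :=
  ∑ t, ∑ x, ∑ y, -(Q t x y * Real.log (Q t x y / margXY Q x y))

/-- The conditional mutual information `I_Q(T:X|Y)`. -/
def CMI [Fintype T] [Fintype X] [Fintype Y] (Q : T → X → Y → ℝ) : ℝ :=
  ∑ t, ∑ x, ∑ y,
    Q t x y * Real.log (Q t x y * margY Q y / (margTY Q t y * margXY Q x y))

/-!
Suppose `Q*(x,y) > 0` and pick `Q ∈ Δ_P` with `Q(t,x,y) > 0`. The segment
`Q_l = (1-l) Q* + l Q` stays in the convex set `Δ_P`, on which the `(T,Y)`- and `Y`-marginals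
are fixed, so `I(T:X|Y)` equals `-H(T|X,Y)` up to a constant. Write `-H(T|X,Y)` as a sum over
the `(x,y)`-fibres of `∑_t φ(q_t) - φ(∑_t q_t)` with `φ(z) = z log z`. Convexity of `φ` bounds
the increase of each fibre along the segment by `O(l)`, except that a coordinate leaving zero
contributes an extra `l log l` times its mass. In a fibre of zero mass this cancels against the
marginal term, but in the fibre `(x,y)` the marginal is positive, so `φ` of it is smooth there.
Hence `I(Q_l) - I(Q*) ≤ l C + l log l · Q(t,x,y) < 0` for small `l`, contradicting minimality.
-/

open Real Finset

/-- `-(∑ v) · H(v / ∑ v)`: the contribution of one `(x, y)`-fibre to `-H(T | X, Y)`. -/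
def negEntropy [Fintype T] (v : T → ℝ) : ℝ :=
  ∑ a, v a * log (v a) - (∑ a, v a) * log (∑ a, v a)

def fibreNegEntropy [Fintype T] [Fintype X] [Fintype Y] (Q : T → X → Y → ℝ) : ℝ :=
  ∑ x, ∑ y, negEntropy (fun t => Q t x y)

lemma mul_mul_log_mul {l : ℝ} (hl : 0 < l) (b : ℝ) :
    l * b * log (l * b) = l * (b * log b) + l * log l * b := by
  rcases eq_or_ne b 0 with rfl | hb
  · simp
  · rw [log_mul hl.ne' hb]; ring

lemma mul_log_add_le_mul_log {a b : ℝ} (ha : 0 < a) (hb : 0 ≤ b) :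
    a * log a + (log a + 1) * (b - a) ≤ b * log b := by
  rcases hb.eq_or_lt with rfl | hb
  · linarith
  · have h := mul_le_mul_of_nonneg_left (log_le_sub_one_of_pos (div_pos ha hb)) hb.le
    rw [log_div ha.ne' hb.ne', show b * (a / b - 1) = a - b by field_simp] at h
    linarith

lemma mul_log_lineMap_le {a b l : ℝ} (ha : 0 ≤ a) (hb : 0 ≤ b) (hl0 : 0 < l) (hl1 : l ≤ 1) :
    ((1 - l) * a + l * b) * log ((1 - l) * a + l * b)
      ≤ a * log a + l * (b * log b - a * log a) + l * log l * (if a = 0 then b else 0) := by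
  rcases ha.eq_or_lt with rfl | ha
  · simp [mul_mul_log_mul hl0]
  · have hconv := convexOn_mul_log.2 (Set.mem_Ici.2 ha.le) (Set.mem_Ici.2 hb)
      (sub_nonneg.2 hl1) hl0.le (by ring)
    simp only [smul_eq_mul] at hconv
    rw [if_neg ha.ne', mul_zero, add_zero]
    linarith

section Fibre

variable [Fintype T] {u w : T → ℝ}

lemma negEntropy_smul {l : ℝ} (hl : 0 < l) (v : T → ℝ) :
    negEntropy (fun a => l * v a) = l * negEntropy v := by
  simp only [negEntropy, ← mul_sum, mul_mul_log_mul hl, sum_add_distrib]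
  ring

lemma negEntropy_lineMap_le_of_pos (hu : ∀ a, 0 ≤ u a) (hw : ∀ a, 0 ≤ w a)
    (hs : 0 < ∑ a, u a) (t : T) : ∃ D, ∀ l ∈ Set.Ioo (0 : ℝ) 1,
      negEntropy (fun a => (1 - l) * u a + l * w a)
        ≤ negEntropy u + l * D + l * log l * (if u t = 0 then w t else 0) := by
  refine ⟨∑ a, w a * log (w a) - ∑ a, u a * log (u a)
    - (log (∑ a, u a) + 1) * (∑ a, w a - ∑ a, u a),
    fun l ⟨hl0, hl1⟩ => ?_⟩
  have hsum : ∑ a, ((1 - l) * u a + l * w a) = ∑ a, u a + l * (∑ a, w a - ∑ a, u a) := by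
    simp only [sum_add_distrib, ← mul_sum]; ring
  have hmix_nonneg : 0 ≤ ∑ a, u a + l * (∑ a, w a - ∑ a, u a) := by
    rw [← hsum]
    exact sum_nonneg fun a _ =>
      add_nonneg (mul_nonneg (by linarith) (hu a)) (mul_nonneg hl0.le (hw a))
  have htangent := mul_log_add_le_mul_log hs hmix_nonneg
  have hconv := sum_le_sum fun a (_ : a ∈ univ) => mul_log_lineMap_le (hu a) (hw a) hl0 hl1.le
  simp only [sum_add_distrib, ← mul_sum, sum_sub_distrib] at hconv
  have hgain : l * log l * ∑ a, (if u a = 0 then w a else 0)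
      ≤ l * log l * (if u t = 0 then w t else 0) :=
    mul_le_mul_of_nonpos_left
      (single_le_sum (f := fun a => if u a = 0 then w a else 0)
        (fun a _ => ite_nonneg (hw a) le_rfl) (mem_univ t))
      (mul_nonpos_of_nonneg_of_nonpos hl0.le (log_nonpos hl0.le hl1.le))
  rw [negEntropy, negEntropy, hsum]
  linarith

lemma negEntropy_lineMap_le (hu : ∀ a, 0 ≤ u a) (hw : ∀ a, 0 ≤ w a) (t : T) :
    ∃ D, ∀ l ∈ Set.Ioo (0 : ℝ) 1, negEntropy (fun a => (1 - l) * u a + l * w a)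
      ≤ negEntropy u + l * D + l * log l * (if u t = 0 ∧ 0 < ∑ a, u a then w t else 0) := by
  rcases (sum_nonneg fun a _ => hu a).eq_or_lt with hs | hs
  · have hu0 : u = 0 :=
      funext fun a => (sum_eq_zero_iff_of_nonneg fun a _ => hu a).1 hs.symm a (mem_univ a)
    refine ⟨negEntropy w, fun l ⟨hl0, _⟩ => ?_⟩
    have hmix : (fun a => (1 - l) * u a + l * w a) = fun a => l * w a := by simp [hu0]
    rw [if_neg fun h => h.2.ne hs, hmix, negEntropy_smul hl0, hu0]
    simp [negEntropy]
  · simpa only [hs, and_true] using negEntropy_lineMap_le_of_pos hu hw hs t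

end Fibre

section Distributions

variable [Fintype T] [Fintype X] [Fintype Y]

lemma convex_deltaP (P : T → X → Y → ℝ) : Convex ℝ (deltaP P) := by
  rintro Q ⟨⟨hQ0, hQ1⟩, hQTX, hQTY⟩ R ⟨⟨hR0, hR1⟩, hRTX, hRTY⟩ a b ha hb hab
  refine ⟨⟨fun t x y => ?_, ?_⟩, fun t x => ?_, fun t y => ?_⟩
  · have := hQ0 t x y; have := hR0 t x y
    simp only [Pi.add_apply, Pi.smul_apply, smul_eq_mul]
    positivity
  · simp only [Pi.add_apply, Pi.smul_apply, smul_eq_mul, sum_add_distrib, ← mul_sum, hQ1, hR1,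
      mul_one, hab]
  · simp only [margTX, Pi.add_apply, Pi.smul_apply, smul_eq_mul, sum_add_distrib, ← mul_sum]
      at hQTX hRTX ⊢
    rw [hQTX, hRTX, ← add_mul, hab, one_mul]
  · simp only [margTY, Pi.add_apply, Pi.smul_apply, smul_eq_mul, sum_add_distrib, ← mul_sum]
      at hQTY hRTY ⊢
    rw [hQTY, hRTY, ← add_mul, hab, one_mul]

lemma CMI_eq {Q : T → X → Y → ℝ} (hQ : ∀ t x y, 0 ≤ Q t x y) :
    CMI Q = fibreNegEntropy Q + ∑ y, margY Q y * log (margY Q y)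
      - ∑ t, ∑ y, margTY Q t y * log (margTY Q t y) := by
  have hlog : ∀ t x y, Q t x y * log (Q t x y * margY Q y / (margTY Q t y * margXY Q x y))
      = Q t x y * log (Q t x y) + Q t x y * log (margY Q y)
        - Q t x y * log (margTY Q t y) - Q t x y * log (margXY Q x y) := by
    intro t x y
    rcases (hQ t x y).eq_or_lt with h | h
    · simp [← h]
    have hXY : 0 < margXY Q x y := h.trans_le (single_le_sum (fun a _ => hQ a x y) (mem_univ t))
    have hTY : 0 < margTY Q t y := h.trans_le (single_le_sum (fun a _ => hQ t a y) (mem_univ x))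
    have hY : 0 < margY Q y :=
      hTY.trans_le (single_le_sum (fun a _ => sum_nonneg fun b _ => hQ a b y) (mem_univ t))
    rw [log_div (by positivity) (by positivity), log_mul h.ne' hY.ne', log_mul hTY.ne' hXY.ne']
    ring
  have hXY : ∑ t, ∑ x, ∑ y, Q t x y * log (margXY Q x y)
      = ∑ x, ∑ y, margXY Q x y * log (margXY Q x y) := by
    simp only [margXY, sum_mul]; exact sum_comm.trans (sum_congr rfl fun _ _ => sum_comm)
  have hTY : ∑ t, ∑ x, ∑ y, Q t x y * log (margTY Q t y)
      = ∑ t, ∑ y, margTY Q t y * log (margTY Q t y) := by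
    simp only [margTY, sum_mul]; exact sum_congr rfl fun _ _ => sum_comm
  have hY : ∑ t, ∑ x, ∑ y, Q t x y * log (margY Q y)
      = ∑ y, margY Q y * log (margY Q y) := by
    simp only [margY, sum_mul]; exact (sum_congr rfl fun _ _ => sum_comm).trans sum_comm
  have hQlogQ : ∑ t, ∑ x, ∑ y, Q t x y * log (Q t x y)
      = ∑ x, ∑ y, ∑ t, Q t x y * log (Q t x y) :=
    sum_comm.trans (sum_congr rfl fun _ _ => sum_comm)
  simp only [CMI, hlog, sum_add_distrib, sum_sub_distrib, hXY, hTY, hY, hQlogQ]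
  simp only [fibreNegEntropy, negEntropy, sum_sub_distrib, margXY]
  ring

lemma CMI_sub_CMI {P Q R : T → X → Y → ℝ} (hQ : Q ∈ deltaP P) (hR : R ∈ deltaP P) :
    CMI Q - CMI R = fibreNegEntropy Q - fibreNegEntropy R := by
  have hY : margY Q = margY R := funext fun y => sum_congr rfl fun t _ =>
    (hQ.2.2 t y).trans (hR.2.2 t y).symm
  rw [CMI_eq hQ.1.1, CMI_eq hR.1.1, hY]
  simp only [hQ.2.2, hR.2.2]
  ring

lemma fibreNegEntropy_lineMap_le {Qs Q : T → X → Y → ℝ} (hQs : ∀ t x y, 0 ≤ Qs t x y)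
    (hQ : ∀ t x y, 0 ≤ Q t x y) {t : T} {x : X} {y : Y} (h0 : Qs t x y = 0)
    (hm : 0 < margXY Qs x y) : ∃ C, ∀ l ∈ Set.Ioo (0 : ℝ) 1,
      fibreNegEntropy ((1 - l) • Qs + l • Q)
        ≤ fibreNegEntropy Qs + l * C + l * log l * Q t x y := by
  choose D hD using fun b c => negEntropy_lineMap_le (fun a => hQs a b c) (fun a => hQ a b c) t
  refine ⟨∑ b, ∑ c, D b c, fun l hl => ?_⟩
  set gain : X → Y → ℝ := fun b c => if Qs t b c = 0 ∧ 0 < ∑ a, Qs a b c then Q t b c else 0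
  have hmass : Q t x y ≤ ∑ b, ∑ c, gain b c := by
    have hnonneg : ∀ b c, 0 ≤ gain b c := fun b c => ite_nonneg (hQ t b c) le_rfl
    calc Q t x y = gain x y := (if_pos ⟨h0, hm⟩).symm
      _ ≤ ∑ c, gain x c := single_le_sum (fun c _ => hnonneg x c) (mem_univ y)
      _ ≤ ∑ b, ∑ c, gain b c :=
        single_le_sum (fun b _ => sum_nonneg fun c _ => hnonneg b c) (mem_univ x)
  have hbound :=
    sum_le_sum fun b (_ : b ∈ univ) => sum_le_sum fun c (_ : c ∈ univ) => hD b c l hl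
  simp only [sum_add_distrib, ← mul_sum] at hbound
  have hgain_mul := mul_le_mul_of_nonpos_left hmass
    (mul_nonpos_of_nonneg_of_nonpos hl.1.le (log_nonpos hl.1.le hl.2.le))
  simp only [fibreNegEntropy, Pi.add_apply, Pi.smul_apply, smul_eq_mul]
  linarith

end Distributions

lemma exists_mul_add_mul_log_mul_neg (C : ℝ) {q : ℝ} (hq : 0 < q) :
    ∃ l ∈ Set.Ioo (0 : ℝ) 1, l * C + l * log l * q < 0 := by
  set l := min (1 / 2 : ℝ) (exp (-(C + 1) / q))
  have hl0 : 0 < l := lt_min (by norm_num) (exp_pos _)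
  have hlog : log l ≤ -(C + 1) / q := (log_le_iff_le_exp hl0).2 (min_le_right _ _)
  have hqlog : q * log l ≤ -(C + 1) := by
    rw [le_div_iff₀ hq] at hlog; linarith
  refine ⟨l, ⟨hl0, (min_le_left _ _).trans_lt (by norm_num)⟩, ?_⟩
  nlinarith

theorem minimizer_support_square_general [Fintype T] [Fintype X] [Fintype Y]
    (P Qs : T → X → Y → ℝ)
    (hQs : Qs ∈ deltaP P) (hmin : ∀ Q ∈ deltaP P, CMI Qs ≤ CMI Q)
    (t : T) (x : X) (y : Y) (hsupp : ∃ Q ∈ deltaP P, Q t x y ≠ 0)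
    (h0 : Qs t x y = 0) :
    margXY Qs x y = 0 ∧ ∀ t' : T, Qs t' x y = 0 := by
  have hXY : margXY Qs x y = 0 := by
    by_contra hm
    obtain ⟨Q, hQ, hQt⟩ := hsupp
    obtain ⟨C, hC⟩ := fibreNegEntropy_lineMap_le hQs.1.1 hQ.1.1 h0
      ((sum_nonneg fun a _ => hQs.1.1 a x y).lt_of_ne' hm)
    obtain ⟨l, hl, hneg⟩ := exists_mul_add_mul_log_mul_neg C ((hQ.1.1 t x y).lt_of_ne' hQt)
    have hmix := convex_deltaP P hQs hQ (sub_nonneg.2 hl.2.le) hl.1.le (sub_add_cancel 1 l)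
    have hdiff := CMI_sub_CMI hmix hQs
    linarith [hmin _ hmix, hC l hl]
  exact ⟨hXY, fun t' =>
    (sum_eq_zero_iff_of_nonneg fun a _ => hQs.1.1 a x y).1 hXY t' (mem_univ t')⟩

/-- Let `Q*` minimize `I_Q(T:X|Y)` over `Δ_P` and let `(t,x,y) ∈ supp(Δ_P)`.
If `Q*(t,x,y) = 0` then the marginal `Q*(x,y) = 0`, hence `Q*(t',x,y) = 0` for all
`t'`. -/
theorem minimizer_support_square [Fintype T] [Fintype X] [Fintype Y]
    (P Qs : T → X → Y → ℝ) (hP : IsDist P)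
    (hQs : Qs ∈ deltaP P) (hmin : ∀ Q ∈ deltaP P, CMI Qs ≤ CMI Q)
    (t : T) (x : X) (y : Y) (hsupp : ∃ Q ∈ deltaP P, Q t x y ≠ 0)
    (h0 : Qs t x y = 0) :
    margXY Qs x y = 0 ∧ ∀ t' : T, Qs t' x y = 0 :=
  minimizer_support_square_general P Qs hQs hmin t x y hsupp h0
end
end

section
/- The directional derivative of Q ↦ I_Q(T:X|Y) at Q in the direction γ_{t;x,x';y,y'} = δ_{t,x,y} + δ_{t,x',y'} − δ_{t,x,y'} − δ_{t,x',y} equals log( Q(t|x,y)·Q(t|x',y') / (Q(t|x,y')·Q(t|x',y)) ), provided all four conditional probabilities are positive. -/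
open scoped BigOperators
noncomputable section

variable {T X Y : Type*}

/-- `γ_{t;x,x';y,y'} = δ_{t,x,y} + δ_{t,x',y'} − δ_{t,x,y'} − δ_{t,x',y}`. -/
def gam [DecidableEq T] [DecidableEq X] [DecidableEq Y]
    (t : T) (x x' : X) (y y' : Y) : T → X → Y → ℝ := fun s u v =>
  (if s = t ∧ u = x ∧ v = y then (1 : ℝ) else 0) +
    (if s = t ∧ u = x' ∧ v = y' then 1 else 0) -
    (if s = t ∧ u = x ∧ v = y' then 1 else 0) -
    (if s = t ∧ u = x' ∧ v = y then 1 else 0)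

/-!
The direction `γ` has vanishing `(T,Y)`-marginal, so along `Q + εγ` only `Q(t,x,y)` and
`Q(x,y)` move, while `Q(t,y)` and `Q(y)` stay fixed. Differentiating `I_Q(T:X|Y)` termwise
gives `∑ γ · log (Q(t,x,y) Q(y) / (Q(t,y) Q(x,y)))` plus two correction terms, `∑ γ` and
`∑ Q(t,x,y) γ(x,y) / Q(x,y) = ∑ γ(x,y)`, both total masses of `γ` and hence zero. The
remaining sum is evaluated at the four atoms of `γ`, where the factors
`Q(t|y) = Q(t,y) / Q(y)` cancel.
-/

open Finset Real

def cmiDensity [Fintype T] [Fintype X] (Q : T → X → Y → ℝ) (s : T) (u : X) (v : Y) : ℝ :=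
  log (Q s u v * margY Q v / (margTY Q s v * margXY Q u v))

section Marginals

variable {Q : T → X → Y → ℝ}

lemma le_margXY [Fintype T] (hQ : ∀ s u v, 0 ≤ Q s u v) (s : T) (u : X) (v : Y) :
    Q s u v ≤ margXY Q u v :=
  single_le_sum (fun s _ => hQ s u v) (mem_univ s)

lemma le_margTY [Fintype X] (hQ : ∀ s u v, 0 ≤ Q s u v) (s : T) (u : X) (v : Y) :
    Q s u v ≤ margTY Q s v :=
  single_le_sum (fun u _ => hQ s u v) (mem_univ u)

lemma margY_eq_sum_margTY [Fintype T] [Fintype X] (Q : T → X → Y → ℝ) (v : Y) :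
    margY Q v = ∑ s, margTY Q s v :=
  rfl

lemma margTY_le_margY [Fintype T] [Fintype X] (hQ : ∀ s u v, 0 ≤ Q s u v) (s : T) (v : Y) :
    margTY Q s v ≤ margY Q v :=
  single_le_sum (fun s _ => sum_nonneg fun u _ => hQ s u v) (mem_univ s)

lemma le_margY [Fintype T] [Fintype X] (hQ : ∀ s u v, 0 ≤ Q s u v) (s : T) (u : X) (v : Y) :
    Q s u v ≤ margY Q v :=
  (le_margTY hQ s u v).trans (margTY_le_margY hQ s v)

lemma margXY_line [Fintype T] (Q G : T → X → Y → ℝ) (ε : ℝ) (u : X) (v : Y) :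
    margXY (fun s u v => Q s u v + ε * G s u v) u v = margXY Q u v + ε * margXY G u v := by
  simp only [margXY, sum_add_distrib, mul_sum]

lemma margTY_line [Fintype X] (Q G : T → X → Y → ℝ) (ε : ℝ) (s : T) (v : Y) :
    margTY (fun s u v => Q s u v + ε * G s u v) s v = margTY Q s v + ε * margTY G s v := by
  simp only [margTY, sum_add_distrib, mul_sum]

end Marginals

lemma CMI_line_eq [Fintype T] [Fintype X] [Fintype Y] (Q G : T → X → Y → ℝ)
    (hG : ∀ s v, margTY G s v = 0) (ε : ℝ) :
    CMI (fun s u v => Q s u v + ε * G s u v) =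
      ∑ s, ∑ u, ∑ v, (Q s u v + ε * G s u v) *
        log ((Q s u v + ε * G s u v) * margY Q v /
          (margTY Q s v * (margXY Q u v + ε * margXY G u v))) := by
  have hY : ∀ v, margY (fun s u v => Q s u v + ε * G s u v) v = margY Q v := fun v => by
    simp only [margY_eq_sum_margTY, margTY_line, hG, mul_zero, add_zero]
  simp only [CMI, hY, margTY_line, hG, mul_zero, add_zero, margXY_line]

lemma hasDerivAt_mul_log_div_line {q c K k M d : ℝ} (hq : q ≠ 0) (hK : K ≠ 0) (hk : k ≠ 0)
    (hM : M ≠ 0) :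
    HasDerivAt (fun ε : ℝ => (q + ε * c) * log ((q + ε * c) * K / (k * (M + ε * d))))
      (c * log (q * K / (k * M)) + c - q * d / M) 0 := by
  have line : ∀ a b : ℝ, HasDerivAt (fun ε : ℝ => a + ε * b) b 0 := fun a b => by
    simpa using ((hasDerivAt_id (0 : ℝ)).mul_const b).const_add a
  have harg := ((line q c).mul_const K).fun_div ((line M d).const_mul k) (by simp [hk, hM])
  refine ((line q c).fun_mul (harg.log (by simp [hq, hK, hk, hM]))).congr_deriv ?_
  simp only [zero_mul, add_zero]
  field_simp
  ring

section Direction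

variable {Q G : T → X → Y → ℝ}

lemma sum_eq_zero_of_margTY_eq_zero [Fintype T] [Fintype X] [Fintype Y]
    (hG : ∀ s v, margTY G s v = 0) : ∑ s, ∑ u, ∑ v, G s u v = 0 := by
  calc ∑ s, ∑ u, ∑ v, G s u v = ∑ s, ∑ v, margTY G s v := by
        simp only [margTY, sum_comm (γ := X)]
    _ = 0 := by simp only [hG, sum_const_zero]

/-- Where `margXY Q` vanishes (and `x / 0 = 0` applies), `hsupp` makes `margXY G` vanish too. -/
lemma sum_mul_margXY_div_margXY [Fintype T] (hQ : ∀ s u v, 0 ≤ Q s u v)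
    (hsupp : ∀ s u v, Q s u v = 0 → G s u v = 0) (u : X) (v : Y) :
    ∑ s, Q s u v * margXY G u v / margXY Q u v = margXY G u v := by
  rw [← sum_div, ← sum_mul]
  change margXY Q u v * margXY G u v / margXY Q u v = margXY G u v
  by_cases hM : margXY Q u v = 0
  · have hQ0 : ∀ s, Q s u v = 0 := fun s =>
      (sum_eq_zero_iff_of_nonneg fun s _ => hQ s u v).1 hM s (mem_univ s)
    rw [hM, zero_mul, zero_div]
    exact (sum_eq_zero fun s _ => hsupp s u v (hQ0 s)).symm
  · field_simp

theorem hasDerivAt_CMI_line [Fintype T] [Fintype X] [Fintype Y]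
    (hQ : ∀ s u v, 0 ≤ Q s u v) (hG : ∀ s v, margTY G s v = 0)
    (hsupp : ∀ s u v, Q s u v = 0 → G s u v = 0) :
    HasDerivAt (fun ε : ℝ => CMI fun s u v => Q s u v + ε * G s u v)
      (∑ s, ∑ u, ∑ v, G s u v * cmiDensity Q s u v) 0 := by
  rw [funext (CMI_line_eq Q G hG)]
  have hterm : ∀ s u v, HasDerivAt
      (fun ε : ℝ => (Q s u v + ε * G s u v) * log ((Q s u v + ε * G s u v) * margY Q v /
          (margTY Q s v * (margXY Q u v + ε * margXY G u v))))
      (G s u v * cmiDensity Q s u v + G s u v - Q s u v * margXY G u v / margXY Q u v) 0 := by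
    intro s u v
    rcases (hQ s u v).eq_or_lt with hq | hq
    · simp only [← hq, hsupp s u v hq.symm, zero_mul, mul_zero, add_zero, zero_div, sub_zero]
      exact hasDerivAt_const 0 0
    · exact hasDerivAt_mul_log_div_line hq.ne' (hq.trans_le (le_margY hQ s u v)).ne'
        (hq.trans_le (le_margTY hQ s u v)).ne' (hq.trans_le (le_margXY hQ s u v)).ne'
  refine (HasDerivAt.fun_sum fun s _ => HasDerivAt.fun_sum fun u _ =>
    HasDerivAt.fun_sum fun v _ => hterm s u v).congr_deriv ?_
  have hcorr : ∑ s, ∑ u, ∑ v, Q s u v * margXY G u v / margXY Q u v = 0 := by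
    calc ∑ s, ∑ u, ∑ v, Q s u v * margXY G u v / margXY Q u v
        = ∑ u, ∑ v, ∑ s, Q s u v * margXY G u v / margXY Q u v := sum_comm_cycle.symm
      _ = ∑ u, ∑ v, margXY G u v := by simp only [sum_mul_margXY_div_margXY hQ hsupp]
      _ = ∑ s, ∑ u, ∑ v, G s u v := sum_comm_cycle
      _ = 0 := sum_eq_zero_of_margTY_eq_zero hG
  simp only [sum_add_distrib, sum_sub_distrib, sum_eq_zero_of_margTY_eq_zero hG, hcorr,
    add_zero, sub_zero]

end Direction

section Gamma

variable [DecidableEq T] [DecidableEq X] [DecidableEq Y] (t : T) (x x' : X) (y y' : Y)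

lemma margTY_gam [Fintype X] (s : T) (v : Y) : margTY (gam t x x' y y') s v = 0 := by
  by_cases hs : s = t <;> by_cases hy : v = y <;> by_cases hy' : v = y' <;>
    simp [gam, margTY, sum_add_distrib, sum_sub_distrib, ite_and, hs, hy, hy', sum_ite_eq']

lemma gam_eq_zero_of_eq_zero {Q : T → X → Y → ℝ} (h1 : Q t x y ≠ 0) (h2 : Q t x' y' ≠ 0)
    (h3 : Q t x y' ≠ 0) (h4 : Q t x' y ≠ 0) (s : T) (u : X) (v : Y) (hq : Q s u v = 0) :
    gam t x x' y y' s u v = 0 := by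
  have not_at : ∀ s' u' v', Q s' u' v' ≠ 0 → ¬(s = s' ∧ u = u' ∧ v = v') := by
    rintro s' u' v' hne ⟨rfl, rfl, rfl⟩
    exact hne hq
  simp only [gam, if_neg (not_at _ _ _ h1), if_neg (not_at _ _ _ h2), if_neg (not_at _ _ _ h3),
    if_neg (not_at _ _ _ h4), add_zero, sub_zero]

lemma sum_gam_mul [Fintype T] [Fintype X] [Fintype Y] (L : T → X → Y → ℝ) :
    ∑ s, ∑ u, ∑ v, gam t x x' y y' s u v * L s u v =
      L t x y + L t x' y' - L t x y' - L t x' y := by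
  simp [gam, add_mul, sub_mul, sum_add_distrib, sum_sub_distrib, ite_and, sum_ite_eq']

end Gamma

lemma cmiDensity_eq_sub [Fintype T] [Fintype X] {Q : T → X → Y → ℝ}
    (hQ : ∀ s u v, 0 ≤ Q s u v) {s : T} {u : X} {v : Y} (h : 0 < Q s u v) :
    cmiDensity Q s u v = log (Q s u v / margXY Q u v) - log (margTY Q s v / margY Q v) := by
  have hXY := h.trans_le (le_margXY hQ s u v)
  have hTY := h.trans_le (le_margTY hQ s u v)
  have hY := h.trans_le (le_margY hQ s u v)
  rw [cmiDensity, ← log_div (by positivity) (by positivity)]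
  congr 1
  field_simp

lemma cmiDensity_cross [Fintype T] [Fintype X] {Q : T → X → Y → ℝ}
    (hQ : ∀ s u v, 0 ≤ Q s u v) {t : T} {x x' : X} {y y' : Y}
    (h1 : 0 < Q t x y) (h2 : 0 < Q t x' y') (h3 : 0 < Q t x y') (h4 : 0 < Q t x' y) :
    cmiDensity Q t x y + cmiDensity Q t x' y' - cmiDensity Q t x y' - cmiDensity Q t x' y =
      log ((Q t x y / margXY Q x y) * (Q t x' y' / margXY Q x' y') /
        ((Q t x y' / margXY Q x y') * (Q t x' y / margXY Q x' y))) := by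
  have hcond : ∀ {u v}, 0 < Q t u v → Q t u v / margXY Q u v ≠ 0 := fun h =>
    (div_pos h (h.trans_le (le_margXY hQ t _ _))).ne'
  rw [cmiDensity_eq_sub hQ h1, cmiDensity_eq_sub hQ h2, cmiDensity_eq_sub hQ h3,
    cmiDensity_eq_sub hQ h4, log_div (mul_ne_zero (hcond h1) (hcond h2))
      (mul_ne_zero (hcond h3) (hcond h4)), log_mul (hcond h1) (hcond h2),
    log_mul (hcond h3) (hcond h4)]
  ring

/-- The directional derivative of `Q ↦ I_Q(T:X|Y)` at `Q` in direction
`γ_{t;x,x';y,y'}` equals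
`log (Q(t|x,y) Q(t|x',y') / (Q(t|x,y') Q(t|x',y)))`, provided the four joint
probabilities are positive. -/
theorem CMI_directional_derivative [Fintype T] [Fintype X] [Fintype Y]
    [DecidableEq T] [DecidableEq X] [DecidableEq Y]
    (Q : T → X → Y → ℝ) (hQ : IsDist Q)
    (t : T) (x x' : X) (y y' : Y)
    (h1 : 0 < Q t x y) (h2 : 0 < Q t x' y') (h3 : 0 < Q t x y') (h4 : 0 < Q t x' y) :
    HasDerivAt (fun ε : ℝ => CMI (fun s u v => Q s u v + ε * gam t x x' y y' s u v))
      (Real.log ((Q t x y / margXY Q x y) * (Q t x' y' / margXY Q x' y') /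
        ((Q t x y' / margXY Q x y') * (Q t x' y / margXY Q x' y)))) 0 := by
  obtain ⟨hQ, -⟩ := hQ
  have hderiv := hasDerivAt_CMI_line hQ (margTY_gam t x x' y y')
    (gam_eq_zero_of_eq_zero t x x' y y' h1.ne' h2.ne' h3.ne' h4.ne')
  rwa [sum_gam_mul, cmiDensity_cross hQ h1 h2 h3 h4] at hderiv
end
end
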